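/- Let n ≥ 2 and d ≥ 1, and let φ be a ℂ-algebra automorphism of the invariant ring ℂ[x_1,…,x_n]^{μ_d}. Then for each i ∈ {1,…,n} there exists a polynomial q_i ∈ ℂ[x_1,…,x_n] such that φ(x_i^d) = q_i^d, i.e. φ(x_i^d) is a d-th power in ℂ[x_1,…,x_n]. -/

import Mathlib

open MvPolynomial

/-- The action of a scalar `ζ` on `ℂ[x_1,…,x_n]` scaling all variables simultaneously,
`f ↦ f(ζx_1,…,ζx_n)`. -/
noncomputable def scaleAct (n : ℕ) (ζ : ℂ) :
    MvPolynomial (Fin n) ℂ →ₐ[ℂ] MvPolynomial (Fin n) ℂ :=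
  aeval (fun i => C ζ * X i)

/-- The invariant ring `R = ℂ[x_1,…,x_n]^{μ_d}`. -/
noncomputable def invRing (n d : ℕ) : Subalgebra ℂ (MvPolynomial (Fin n) ℂ) where
  carrier := {f | ∀ ζ : ℂ, ζ ^ d = 1 → scaleAct n ζ f = f}
  mul_mem' := fun hf hg ζ hζ => by rw [map_mul, hf ζ hζ, hg ζ hζ]
  add_mem' := fun hf hg ζ hζ => by rw [map_add, hf ζ hζ, hg ζ hζ]
  algebraMap_mem' := fun c ζ hζ => (scaleAct n ζ).commutes c

theorem X_pow_mem (n d : ℕ) (i : Fin n) :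
    (X i : MvPolynomial (Fin n) ℂ) ^ d ∈ invRing n d := by
  intro ζ hζ
  simp [scaleAct, mul_pow, ← C_pow, hζ]

/-!
Let `j ≠ i` and put `f = φ(x_i^d)`, `u = φ(x_j^d)`, `t = φ(x_i x_j^{d-1})`, so that
`t^d = f u^{d-1}`. In the UFD `ℂ[x]` it suffices that `f` and `u` are coprime: then `f` is a unit
times a `d`-th power, and units are constants, which have `d`-th roots.

The radical of `x_i^d R` is the prime `x_i ℂ[x] ∩ R`, and `x_i^d` divides no power of `x_j^d`;
both facts pass to `f` and `u` through `φ`. Split `f = a b` with `a ∣ u^k` and `b` coprime to `u`.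
The `μ_d`-orbit products `A`, `B` of `a`, `b` are invariant and `f^{|μ_d|} = A B`, so `f ∣ A^m`
or `f ∣ B^m`. The first is impossible since `A ∣ u^{k |μ_d|}`; in the second case `f` is coprime
to `u` because `B` is, `u` being invariant.
-/

section UFD

variable {α : Type*} [CommMonoidWithZero α] [UniqueFactorizationMonoid α]

theorem exists_mul_dvd_pow_isRelPrime (u : α) {f : α} (hf : f ≠ 0) :
    ∃ a b : α, ∃ k : ℕ, f = a * b ∧ a ∣ u ^ k ∧ IsRelPrime b u := by
  induction f using UniqueFactorizationMonoid.induction_on_prime with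
  | h₁ => exact absurd rfl hf
  | h₂ f hu => exact ⟨1, f, 0, (one_mul f).symm, one_dvd _, hu.isRelPrime_left⟩
  | h₃ f p hf0 hp ih =>
    obtain ⟨a, b, k, rfl, hau, hbu⟩ := ih hf0
    by_cases hpu : p ∣ u
    · exact ⟨p * a, b, k + 1, (mul_assoc p a b).symm,
        pow_succ' u k ▸ mul_dvd_mul hpu hau, hbu⟩
    · exact ⟨a, p * b, k, mul_left_comm p a b,
        hau, (hp.irreducible.isRelPrime_iff_not_dvd.mpr hpu).mul_left hbu⟩

end UFD

theorem MvPolynomial.exists_eq_pow_of_mul_eq_pow_of_isRelPrime {σ K : Type*} [Field K]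
    [IsAlgClosed K] {d : ℕ} (hd : d ≠ 0) {f g t : MvPolynomial σ K} (hfg : IsRelPrime f g)
    (h : f * g = t ^ d) : ∃ q, f = q ^ d := by
  let _ := UniqueFactorizationMonoid.toGCDMonoid (MvPolynomial σ K)
  obtain ⟨q, w, hw⟩ := exists_associated_pow_of_mul_eq_pow (gcd_isUnit_iff_isRelPrime.mpr hfg) h
  obtain ⟨c, -, hc⟩ := isUnit_iff_eq_C_of_isReduced.mp w.isUnit
  obtain ⟨δ, hδ⟩ := IsAlgClosed.exists_pow_nat_eq c (Nat.pos_of_ne_zero hd)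
  exact ⟨C δ * q, by rw [← hw, hc, mul_pow, ← C_pow, hδ, mul_comm]⟩

/-- Elementwise form of "the radical of the principal ideal `(f)` is prime or everything". -/
def HasPrimeRadical {M : Type*} [Monoid M] (f : M) : Prop :=
  ∀ a b : M, f ∣ a * b → (∃ m, f ∣ a ^ m) ∨ ∃ m, f ∣ b ^ m

theorem HasPrimeRadical.map_mulEquiv {M N F : Type*} [Monoid M] [Monoid N] [EquivLike F M N]
    [MulEquivClass F M N] {f : M} (hf : HasPrimeRadical f) (e : F) : HasPrimeRadical (e f) := by
  intro a b hab
  rw [← EquivLike.apply_inv_apply e a, ← EquivLike.apply_inv_apply e b, ← map_mul,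
    map_dvd_iff] at hab
  refine (hf _ _ hab).imp (fun ⟨m, hm⟩ => ⟨m, ?_⟩) (fun ⟨m, hm⟩ => ⟨m, ?_⟩) <;>
    simpa only [map_pow, EquivLike.apply_inv_apply] using map_dvd e hm

variable {n d : ℕ}

theorem scaleAct_X (ζ : ℂ) (k : Fin n) : scaleAct n ζ (X k) = C ζ * X k :=
  aeval_X _ k

theorem scaleAct_scaleAct (ζ ξ : ℂ) (p : MvPolynomial (Fin n) ℂ) :
    scaleAct n ζ (scaleAct n ξ p) = scaleAct n (ζ * ξ) p := by
  rw [← AlgHom.comp_apply]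
  congr 1
  refine algHom_ext fun k => ?_
  simp only [AlgHom.comp_apply, scaleAct_X, map_mul, algHom_C, algebraMap_eq]
  ring

theorem scaleAct_one (p : MvPolynomial (Fin n) ℂ) : scaleAct n 1 p = p := by
  rw [← AlgHom.id_apply (R := ℂ) p]
  congr 1
  refine algHom_ext fun k => ?_
  simp [scaleAct_X]

theorem IsRelPrime.map_scaleAct {p q : MvPolynomial (Fin n) ℂ} (h : IsRelPrime p q) {ζ : ℂ}
    (hζ : ζ ≠ 0) : IsRelPrime (scaleAct n ζ p) (scaleAct n ζ q) := by
  have hinv (r : MvPolynomial (Fin n) ℂ) : scaleAct n ζ⁻¹ (scaleAct n ζ r) = r := by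
    rw [scaleAct_scaleAct, inv_mul_cancel₀ hζ, scaleAct_one]
  intro c hcp hcq
  have hc := h (hinv p ▸ map_dvd (scaleAct n ζ⁻¹) hcp) (hinv q ▸ map_dvd (scaleAct n ζ⁻¹) hcq)
  simpa only [scaleAct_scaleAct, mul_inv_cancel₀ hζ, scaleAct_one] using hc.map (scaleAct n ζ)

theorem X_mul_X_pow_pred_mem (hd : d ≠ 0) (i j : Fin n) :
    (X i * X j ^ (d - 1) : MvPolynomial (Fin n) ℂ) ∈ invRing n d := by
  intro ζ hζ
  have hC : C ζ * C (ζ ^ (d - 1)) = (1 : MvPolynomial (Fin n) ℂ) := by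
    rw [← C_mul, ← pow_succ', Nat.sub_add_cancel (Nat.one_le_iff_ne_zero.mpr hd), hζ, C_1]
  rw [map_mul, map_pow, scaleAct_X, scaleAct_X, mul_pow, ← C_pow]
  linear_combination (X i * X j ^ (d - 1)) * hC

theorem coe_dvd_coe_iff {f a : invRing n d} (hf : f ≠ 0) :
    (f : MvPolynomial (Fin n) ℂ) ∣ a ↔ f ∣ a := by
  refine ⟨fun ⟨s, hs⟩ => ⟨⟨s, fun ζ hζ => ?_⟩, Subtype.ext hs⟩, map_dvd (invRing n d).val⟩
  have ha := a.2 ζ hζ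
  rw [hs, map_mul, f.2 ζ hζ] at ha
  exact mul_left_cancel₀ (by exact_mod_cast hf) ha

noncomputable def xPow (n d : ℕ) (i : Fin n) : invRing n d := ⟨X i ^ d, X_pow_mem n d i⟩

@[simp]
theorem coe_xPow (i : Fin n) : (xPow n d i : MvPolynomial (Fin n) ℂ) = X i ^ d := rfl

theorem xPow_ne_zero (i : Fin n) : xPow n d i ≠ 0 :=
  fun h => pow_ne_zero d (X_ne_zero i) (congrArg Subtype.val h)

theorem hasPrimeRadical_xPow (hd : d ≠ 0) (i : Fin n) : HasPrimeRadical (xPow n d i) := by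
  intro a b hab
  have hX : (X i : MvPolynomial (Fin n) ℂ) ∣ a * b :=
    (dvd_pow_self _ hd).trans (map_dvd (invRing n d).val hab)
  refine (X_prime.dvd_or_dvd hX).imp (fun h => ⟨d, ?_⟩) (fun h => ⟨d, ?_⟩) <;>
    exact (coe_dvd_coe_iff (xPow_ne_zero i)).mp (by simpa using pow_dvd_pow_of_dvd h d)

theorem xPow_not_dvd_xPow_pow (hd : d ≠ 0) {i j : Fin n} (hij : i ≠ j) (m : ℕ) :
    ¬ xPow n d i ∣ xPow n d j ^ m := by
  intro h
  have hX : (X i : MvPolynomial (Fin n) ℂ) ∣ X j ^ (d * m) :=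
    (dvd_pow_self _ hd).trans (by simpa [pow_mul] using map_dvd (invRing n d).val h)
  exact hij (X_dvd_X.mp (X_prime.dvd_of_dvd_pow hX))

noncomputable instance (d : ℕ) [NeZero d] : Fintype (rootsOfUnity d ℂ) := Fintype.ofFinite _

noncomputable def orbitProd (n d : ℕ) [NeZero d] :
    MvPolynomial (Fin n) ℂ →* MvPolynomial (Fin n) ℂ :=
  ∏ ζ : rootsOfUnity d ℂ, (scaleAct n (ζ : ℂˣ) : MvPolynomial (Fin n) ℂ →* MvPolynomial (Fin n) ℂ)

section orbitProd

variable [NeZero d]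

theorem orbitProd_apply (p : MvPolynomial (Fin n) ℂ) :
    orbitProd n d p = ∏ ζ : rootsOfUnity d ℂ, scaleAct n (ζ : ℂˣ) p := by
  simp [orbitProd, MonoidHom.finsetProd_apply]

theorem orbitProd_mem (p : MvPolynomial (Fin n) ℂ) : orbitProd n d p ∈ invRing n d := by
  intro ξ hξ
  simp only [orbitProd_apply, map_prod, scaleAct_scaleAct]
  exact Fintype.prod_equiv (Equiv.mulLeft (rootsOfUnity.mkOfPowEq ξ hξ)) _ _ fun ζ => by simp

theorem orbitProd_eq_pow_of_mem {f : MvPolynomial (Fin n) ℂ} (hf : f ∈ invRing n d) :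
    orbitProd n d f = f ^ Fintype.card (rootsOfUnity d ℂ) := by
  rw [orbitProd_apply, ← Finset.card_univ, ← Finset.prod_const]
  exact Finset.prod_congr rfl fun ζ _ => hf _ ((mem_rootsOfUnity' d _).mp ζ.2)

theorem IsRelPrime.orbitProd_left {b u : MvPolynomial (Fin n) ℂ} (hbu : IsRelPrime b u)
    (hu : u ∈ invRing n d) : IsRelPrime (orbitProd n d b) u := by
  rw [orbitProd_apply]
  refine IsRelPrime.prod_left fun ζ _ => ?_
  have := hbu.map_scaleAct (ζ : ℂˣ).ne_zero
  rwa [hu _ ((mem_rootsOfUnity' d _).mp ζ.2)] at this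

theorem isRelPrime_of_hasPrimeRadical {f u : invRing n d} (hf0 : f ≠ 0)
    (hf : HasPrimeRadical f) (hfu : ∀ m, ¬ f ∣ u ^ m) :
    IsRelPrime (f : MvPolynomial (Fin n) ℂ) u := by
  obtain ⟨a, b, k, hab, hau, hbu⟩ :=
    exists_mul_dvd_pow_isRelPrime (u : MvPolynomial (Fin n) ℂ) (mt ZeroMemClass.coe_eq_zero.mp hf0)
  set N := Fintype.card (rootsOfUnity d ℂ)
  let A : invRing n d := ⟨orbitProd n d a, orbitProd_mem a⟩
  let B : invRing n d := ⟨orbitProd n d b, orbitProd_mem b⟩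
  have hfAB : f ∣ A * B := by
    refine (dvd_pow_self f (Fintype.card_ne_zero (α := rootsOfUnity d ℂ))).trans (dvd_of_eq (Subtype.ext ?_))
    simp [A, B, ← map_mul, ← hab, orbitProd_eq_pow_of_mem f.2]
  rcases hf A B hfAB with ⟨m, hm⟩ | ⟨m, hm⟩
  · have hA : (A : MvPolynomial (Fin n) ℂ) ∣ (u : MvPolynomial (Fin n) ℂ) ^ (k * N) := by
      rw [pow_mul, ← orbitProd_eq_pow_of_mem (pow_mem u.2 k)]
      exact map_dvd _ hau
    refine absurd ((coe_dvd_coe_iff hf0).mp ?_) (hfu (k * N * m))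
    simpa [pow_mul] using (map_dvd (invRing n d).val hm).trans (pow_dvd_pow_of_dvd hA m)
  · exact (hbu.orbitProd_left u.2).pow_left.of_dvd_left
      (by simpa using map_dvd (invRing n d).val hm)

end orbitProd

/-- for a `ℂ`-algebra automorphism `φ` of `ℂ[x_1,…,x_n]^{μ_d}` and each `i`,
`φ(x_i^d)` is a `d`-th power in `ℂ[x_1,…,x_n]`. -/
theorem dth_power_of_invRing_automorphism (n d : ℕ) (hn : 2 ≤ n) (hd : 1 ≤ d)
    (φ : invRing n d ≃ₐ[ℂ] invRing n d) (i : Fin n) :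
    ∃ q : MvPolynomial (Fin n) ℂ,
      (φ ⟨X i ^ d, X_pow_mem n d i⟩ : MvPolynomial (Fin n) ℂ) = q ^ d := by
  change ∃ q, (φ (xPow n d i) : MvPolynomial (Fin n) ℂ) = q ^ d
  have : NeZero d := ⟨by omega⟩
  obtain ⟨j, hji⟩ : ∃ j : Fin n, j ≠ i :=
    have : Nontrivial (Fin n) := Fin.nontrivial_iff_two_le.mpr hn
    exists_ne i
  let xij : invRing n d := ⟨X i * X j ^ (d - 1), X_mul_X_pow_pred_mem (NeZero.ne d) i j⟩
  have hrel : xPow n d i * xPow n d j ^ (d - 1) = xij ^ d := by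
    refine Subtype.ext ?_
    simp only [coe_xPow, xij, MulMemClass.coe_mul, SubmonoidClass.coe_pow, mul_pow, ← pow_mul]
    rw [mul_comm d]
  have hcop : IsRelPrime (φ (xPow n d i) : MvPolynomial (Fin n) ℂ) (φ (xPow n d j)) :=
    isRelPrime_of_hasPrimeRadical ((map_ne_zero_iff φ φ.injective).mpr (xPow_ne_zero i))
      ((hasPrimeRadical_xPow (NeZero.ne d) i).map_mulEquiv φ)
      fun m => by rw [← map_pow, map_dvd_iff]; exact xPow_not_dvd_xPow_pow (NeZero.ne d) hji.symm m
  exact exists_eq_pow_of_mul_eq_pow_of_isRelPrime (NeZero.ne d) hcop.pow_right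
    (by simpa using congrArg (fun x => (φ x : MvPolynomial (Fin n) ℂ)) hrel)
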